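/- For any finite simple graph G=(V,E) and any vertex v ∈ V, γ_coe(G) ≤ γ_coe(G−v) + deg(v) + 1, where G−v is the graph obtained by deleting v and all incident edges (equivalently γ_coe(G−v) ≥ γ_coe(G) − deg(v) − 1). -/
import Mathlib


open SimpleGraph

/-- The degree of a vertex: the number of its neighbours. -/
noncomputable def degN {V : Type*} (G : SimpleGraph V) (v : V) : ℕ :=
  (G.neighborSet v).ncard

/-- `D` is a co-even dominating set of `G`: it is a dominating set and every
vertex outside `D` has even degree. -/
def IsCoEvenDom {V : Type*} (G : SimpleGraph V) (D : Set V) : Prop :=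
  (∀ v ∉ D, ∃ u ∈ D, G.Adj u v) ∧ ∀ v ∉ D, Even (degN G v)

/-- The co-even domination number. -/
noncomputable def coevenNum {V : Type*} (G : SimpleGraph V) : ℕ :=
  sInf {n | ∃ D : Set V, IsCoEvenDom G D ∧ D.ncard = n}

lemma degN_induce_eq {V : Type*} (G : SimpleGraph V) (v w : V) (hne : w ≠ v)
    (hadj : ¬ G.Adj v w) :
    degN (G.induce {u : V | u ≠ v}) ⟨w, hne⟩ = degN G w := by
  have himg : (Subtype.val '' ((G.induce {u : V | u ≠ v}).neighborSet ⟨w, hne⟩))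
      = G.neighborSet w := by
    ext u
    simp only [Set.mem_image, mem_neighborSet, comap_adj, Function.Embedding.coe_subtype]
    constructor
    · rintro ⟨⟨u', hu'⟩, h, rfl⟩
      exact h
    · intro h
      have hu : u ≠ v := by
        rintro rfl
        exact hadj h.symm
      exact ⟨⟨u, hu⟩, h, rfl⟩
  unfold degN
  rw [← himg, Set.ncard_image_of_injective _ Subtype.val_injective]

/-- `γ_coe(G) ≤ γ_coe(G−v) + deg v + 1`. -/
theorem stmt_5 {V : Type*} [Fintype V] (G : SimpleGraph V) (v : V) :
    coevenNum G ≤ coevenNum (G.induce {u : V | u ≠ v}) + degN G v + 1 := by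
  have hne : {n | ∃ D : Set {u : V | u ≠ v},
      IsCoEvenDom (G.induce {u : V | u ≠ v}) D ∧ D.ncard = n}.Nonempty := by
    refine ⟨(Set.univ : Set {u : V | u ≠ v}).ncard, Set.univ, ⟨?_, ?_⟩, rfl⟩ <;>
      exact fun w hw => absurd (Set.mem_univ w) hw
  obtain ⟨D, hD, hcard⟩ := Nat.sInf_mem hne
  set D' : Set V := (Subtype.val '' D) ∪ (G.neighborSet v ∪ {v}) with hD'
  have hvD' : v ∈ D' := Or.inr (Or.inr rfl)
  have hDom : IsCoEvenDom G D' := by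
    constructor
    · intro w hw
      have hwv : w ≠ v := fun h => hw (h ▸ hvD')
      have hwa : ¬ G.Adj v w := fun h => hw (Or.inr (Or.inl h))
      have hwD : (⟨w, hwv⟩ : {u : V | u ≠ v}) ∉ D := by
        intro h
        exact hw (Or.inl ⟨⟨w, hwv⟩, h, rfl⟩)
      obtain ⟨u, hu, huw⟩ := hD.1 _ hwD
      exact ⟨u.val, Or.inl ⟨u, hu, rfl⟩, huw⟩
    · intro w hw
      have hwv : w ≠ v := fun h => hw (h ▸ hvD')
      have hwa : ¬ G.Adj v w := fun h => hw (Or.inr (Or.inl h))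
      have hwD : (⟨w, hwv⟩ : {u : V | u ≠ v}) ∉ D := by
        intro h
        exact hw (Or.inl ⟨⟨w, hwv⟩, h, rfl⟩)
      have := hD.2 _ hwD
      rwa [degN_induce_eq G v w hwv hwa] at this
  have hle : coevenNum G ≤ D'.ncard := Nat.sInf_le ⟨D', hDom, rfl⟩
  have h1 : D'.ncard ≤ (Subtype.val '' D).ncard + (G.neighborSet v ∪ {v}).ncard :=
    Set.ncard_union_le _ _
  have h2 : (G.neighborSet v ∪ {v} : Set V).ncard ≤ (G.neighborSet v).ncard + 1 := by
    simpa using Set.ncard_union_le (G.neighborSet v) {v}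
  have h3 : (Subtype.val '' D).ncard = D.ncard :=
    Set.ncard_image_of_injective _ Subtype.val_injective
  calc coevenNum G ≤ D'.ncard := hle
    _ ≤ D.ncard + ((G.neighborSet v).ncard + 1) := by omega
    _ = coevenNum (G.induce {u : V | u ≠ v}) + degN G v + 1 := by
        rw [hcard]; rfl
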